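/- Let H be a real Hilbert space, A : H → H a continuous self-adjoint nonnegative linear operator, 0 ≤ p ≤ 1, γ ≥ 1, and u₀ ∈ H with ⟨Au₀,u₀⟩ > 0. Let u : [0,∞) → H be a C¹ solution of u'(t) + (1+t)^{p} ⟨Au(t),u(t)⟩^γ A u(t) = 0 with u(0) = u₀. Then there exists a constant γ₄ > 0 (depending only on u₀, A, γ, p) such that for all t ≥ 0: ⟨Au(t),u(t)⟩^{γ−1} |Au(t)|² ≤ γ₄ (1+t)^{−(p+1)}. -/

import Mathlib

open Real
open scoped RealInnerProductSpace

/-- `u` (with derivative `u'`) is a global C¹ solution on `[0,∞)` of the parabolic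
Cauchy problem `u' + (1+t)^{p} ⟨Au,u⟩^γ A u = 0`, `u(0) = u₀`. -/
def IsParSolution {H : Type*} [NormedAddCommGroup H] [InnerProductSpace ℝ H]
    (A : H →L[ℝ] H) (p γ : ℝ) (u₀ : H) (u u' : ℝ → H) : Prop :=
  u 0 = u₀ ∧
  (∀ t ∈ Set.Ici (0:ℝ), HasDerivWithinAt u (u' t) (Set.Ici 0) t) ∧
  ContinuousOn u' (Set.Ici 0) ∧
  (∀ t ∈ Set.Ici (0:ℝ),
    u' t + ((1+t) ^ p * ⟪A (u t), u t⟫ ^ γ) • A (u t) = 0)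

/-! With `a = ⟪A u, u⟫`, `c = ‖A u‖²`, `d = ⟪A (A u), A u⟫` and `k = (1+t)^p a^γ`, the equation
gives `a' = -2 k c` and `c' = -2 k d`, so `c` is nonincreasing, and Cauchy–Schwarz for the
nonnegative form `⟪A ·, ·⟫` gives `c² ≤ a d`. If `c(t) = 0` there is nothing to prove; otherwise
`c > 0`, hence also `a > 0`, on `[0, t]`, and there `φ = a^{1-γ} / c` satisfies
`φ' = 2 (1+s)^p ((γ-1) c² + a d) / c² ≥ 2 (1+s)^p`. Integrating gives `φ(t) ≥ m (1+t)^{p+1}` with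
`m = min (φ 0) (2/(p+1))`, and `a^{γ-1} c = 1/φ`. -/

open Set

theorem Convex.monotoneOn_of_hasDerivWithinAt_nonneg {D S : Set ℝ} (hD : Convex ℝ D)
    (hDS : D ⊆ S) {f f' : ℝ → ℝ} (hf : ∀ x ∈ D, HasDerivWithinAt f (f' x) S x)
    (hf' : ∀ x ∈ interior D, 0 ≤ f' x) : MonotoneOn f D :=
  _root_.monotoneOn_of_hasDerivWithinAt_nonneg hD
    (fun x hx => (hf x hx).continuousWithinAt.mono hDS)
    (fun x hx => (hf x (interior_subset hx)).mono (interior_subset.trans hDS)) hf'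

theorem Convex.antitoneOn_of_hasDerivWithinAt_nonpos {D S : Set ℝ} (hD : Convex ℝ D)
    (hDS : D ⊆ S) {f f' : ℝ → ℝ} (hf : ∀ x ∈ D, HasDerivWithinAt f (f' x) S x)
    (hf' : ∀ x ∈ interior D, f' x ≤ 0) : AntitoneOn f D :=
  _root_.antitoneOn_of_hasDerivWithinAt_nonpos hD
    (fun x hx => (hf x hx).continuousWithinAt.mono hDS)
    (fun x hx => (hf x (interior_subset hx)).mono (interior_subset.trans hDS)) hf'

theorem rpow_sub_one_mul_eq_inv_div {a γ : ℝ} (ha : 0 < a) (c : ℝ) :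
    a ^ (γ - 1) * c = (a ^ (1 - γ) / c)⁻¹ := by
  rw [inv_div, div_eq_mul_inv, ← rpow_neg ha.le, neg_sub, mul_comm]

namespace ContinuousLinearMap.IsPositive

variable {H : Type*} [NormedAddCommGroup H] [InnerProductSpace ℝ H] {A : H →L[ℝ] H}

theorem real_inner_sq_le (hA : A.IsPositive) (x y : H) :
    ⟪A x, y⟫ ^ 2 ≤ ⟪A x, x⟫ * ⟪A y, y⟫ :=
  calc ⟪A x, y⟫ ^ 2 = ⟪A x, y⟫ * ⟪A y, x⟫ := by
        rw [sq, hA.inner_left_eq_inner_right y, real_inner_comm]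
    _ ≤ ⟪A x, x⟫ * ⟪A y, y⟫ := LinearMap.BilinForm.apply_mul_apply_le_of_forall_zero_le
        ((innerₗ H).compl₁₂ (A : H →ₗ[ℝ] H) LinearMap.id) hA.inner_nonneg_left x y

theorem hasDerivWithinAt_inner_apply_self (hA : A.IsPositive) {w : ℝ → H} {k t : ℝ}
    {s : Set ℝ} (hw : HasDerivWithinAt w (-k • A (w t)) s t) :
    HasDerivWithinAt (fun τ => ⟪A (w τ), w τ⟫) (-2 * k * ‖A (w t)‖ ^ 2) s t := by
  refine ((A.hasFDerivAt.comp_hasDerivWithinAt t hw).inner ℝ hw).congr_deriv ?_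
  simp only [Function.comp_apply, map_smul, real_inner_smul_left, real_inner_smul_right,
    hA.inner_left_eq_inner_right (A (w t)), real_inner_self_eq_norm_sq]
  ring

theorem inner_apply_self_pos (hA : A.IsPositive) {x : H} (hx : 0 < ‖A x‖ ^ 2) :
    0 < ⟪A x, x⟫ := by
  have h := hA.real_inner_sq_le x (A x)
  rw [real_inner_self_eq_norm_sq] at h
  exact pos_of_mul_pos_left ((pow_pos hx 2).trans_le h) (hA.inner_nonneg_left _)

end ContinuousLinearMap.IsPositive

section ParabolicFlow

variable {H : Type*} [NormedAddCommGroup H] [InnerProductSpace ℝ H] {A : H →L[ℝ] H}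

theorem hasDerivWithinAt_norm_sq_apply {w : ℝ → H} {k t : ℝ} {s : Set ℝ}
    (hw : HasDerivWithinAt w (-k • A (w t)) s t) :
    HasDerivWithinAt (fun τ => ‖A (w τ)‖ ^ 2) (-2 * k * ⟪A (A (w t)), A (w t)⟫) s t := by
  refine (A.hasFDerivAt.comp_hasDerivWithinAt t hw).norm_sq.congr_deriv ?_
  simp only [Function.comp_apply, map_smul, real_inner_smul_right, real_inner_comm (A (A (w t)))]
  ring

namespace IsParSolution

variable {p γ : ℝ} {u₀ : H} {u u' : ℝ → H}

theorem hasDerivWithinAt (hu : IsParSolution A p γ u₀ u u') {t : ℝ} (ht : 0 ≤ t) :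
    HasDerivWithinAt u (-((1 + t) ^ p * ⟪A (u t), u t⟫ ^ γ) • A (u t)) (Ici 0) t := by
  rw [neg_smul, ← eq_neg_of_add_eq_zero_left (hu.2.2.2 t ht)]
  exact hu.2.1 t ht

theorem antitoneOn_norm_sq_apply (hA : A.IsPositive) (hu : IsParSolution A p γ u₀ u u') :
    AntitoneOn (fun t => ‖A (u t)‖ ^ 2) (Ici 0) := by
  refine (convex_Ici 0).antitoneOn_of_hasDerivWithinAt_nonpos subset_rfl
    (fun t ht => hasDerivWithinAt_norm_sq_apply (hu.hasDerivWithinAt ht)) fun t ht => ?_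
  have hk : 0 ≤ (1 + t) ^ p * ⟪A (u t), u t⟫ ^ γ :=
    mul_nonneg (rpow_nonneg (by linarith [mem_Ici.1 (interior_subset ht)]) p)
      (rpow_nonneg (hA.inner_nonneg_left _) γ)
  nlinarith [hA.inner_nonneg_left (A (u t))]

theorem hasDerivWithinAt_rpow_div (hA : A.IsPositive) (hu : IsParSolution A p γ u₀ u u')
    {t : ℝ} (ht : 0 ≤ t) (ha : 0 < ⟪A (u t), u t⟫) (hc : 0 < ‖A (u t)‖ ^ 2) :
    HasDerivWithinAt (fun s => ⟪A (u s), u s⟫ ^ (1 - γ) / ‖A (u s)‖ ^ 2)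
      (2 * (1 + t) ^ p * ((γ - 1) * (‖A (u t)‖ ^ 2) ^ 2
        + ⟪A (u t), u t⟫ * ⟪A (A (u t)), A (u t)⟫) / (‖A (u t)‖ ^ 2) ^ 2) (Ici 0) t := by
  have hu' := hu.hasDerivWithinAt ht
  refine ((hA.hasDerivWithinAt_inner_apply_self hu').rpow_const (p := 1 - γ) (Or.inl ha.ne')
    |>.div (hasDerivWithinAt_norm_sq_apply hu') hc.ne').congr_deriv ?_
  set a := ⟪A (u t), u t⟫
  set c := ‖A (u t)‖ ^ 2
  have h₁ : a ^ γ * a ^ (1 - γ - 1) = 1 := by rw [← rpow_add ha]; norm_num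
  have h₂ : a ^ γ * a ^ (1 - γ) = a := by rw [← rpow_add ha]; norm_num
  field_simp
  linear_combination (γ - 1) * c ^ 2 * h₁ + ⟪A (A (u t)), A (u t)⟫ * h₂

theorem mul_rpow_le_rpow_div (hA : A.IsPositive) (hu : IsParSolution A p γ u₀ u u')
    (hp : 0 ≤ p) (hγ : 1 ≤ γ) {t : ℝ} (ht : 0 ≤ t) (hct : 0 < ‖A (u t)‖ ^ 2) {m : ℝ}
    (hm₀ : m ≤ ⟪A u₀, u₀⟫ ^ (1 - γ) / ‖A u₀‖ ^ 2) (hm : m * (p + 1) ≤ 2) :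
    m * (1 + t) ^ (p + 1) ≤ ⟪A (u t), u t⟫ ^ (1 - γ) / ‖A (u t)‖ ^ 2 := by
  have hc : ∀ s ∈ Icc 0 t, 0 < ‖A (u s)‖ ^ 2 := fun s hs =>
    hct.trans_le (hu.antitoneOn_norm_sq_apply hA hs.1 ht hs.2)
  have hpow : ∀ s ∈ Icc 0 t,
      HasDerivWithinAt (fun s => m * (1 + s) ^ (p + 1)) (m * ((p + 1) * (1 + s) ^ p)) (Ici 0) s :=
    fun s _ => by
      simpa using (((hasDerivAt_id s).const_add 1).rpow_const (p := p + 1) (Or.inr (by linarith))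
        |>.const_mul m).hasDerivWithinAt
  have hmono := (convex_Icc 0 t).monotoneOn_of_hasDerivWithinAt_nonneg Icc_subset_Ici_self
    (fun s hs => (hu.hasDerivWithinAt_rpow_div hA hs.1 (hA.inner_apply_self_pos (hc s hs))
      (hc s hs)).sub (hpow s hs)) fun s hs => by
    rw [interior_Icc] at hs
    have h1s : 0 ≤ (1 + s) ^ p := rpow_nonneg (by linarith [hs.1]) p
    have hcs : (‖A (u s)‖ ^ 2) ^ 2 ≤ ⟪A (u s), u s⟫ * ⟪A (A (u s)), A (u s)⟫ := by
      simpa only [real_inner_self_eq_norm_sq] using hA.real_inner_sq_le (u s) (A (u s))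
    have hq : 1 ≤ ((γ - 1) * (‖A (u s)‖ ^ 2) ^ 2 + ⟪A (u s), u s⟫ * ⟪A (A (u s)), A (u s)⟫)
        / (‖A (u s)‖ ^ 2) ^ 2 := by
      rw [one_le_div (pow_pos (hc s (Ioo_subset_Icc_self hs)) 2)]
      linarith [mul_nonneg (sub_nonneg.2 hγ) (sq_nonneg (‖A (u s)‖ ^ 2))]
    rw [sub_nonneg, mul_div_assoc]
    calc m * ((p + 1) * (1 + s) ^ p) = m * (p + 1) * (1 + s) ^ p := by ring
      _ ≤ 2 * (1 + s) ^ p := mul_le_mul_of_nonneg_right hm h1s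
      _ ≤ 2 * (1 + s) ^ p * _ := le_mul_of_one_le_right (mul_nonneg zero_le_two h1s) hq
  have := hmono ⟨le_rfl, ht⟩ ⟨ht, le_rfl⟩ ht
  simp only [Pi.sub_apply, add_zero, one_rpow, mul_one, hu.1] at this
  linarith

theorem decay_of_norm_sq_pos (hA : A.IsPositive) (hu : IsParSolution A p γ u₀ u u')
    (hp : 0 ≤ p) (hγ : 1 ≤ γ) {γ₄ : ℝ} (hγ₄₀ : ⟪A u₀, u₀⟫ ^ (γ - 1) * ‖A u₀‖ ^ 2 ≤ γ₄)
    (hγ₄ : (p + 1) / 2 ≤ γ₄) {t : ℝ} (ht : 0 ≤ t) (hct : 0 < ‖A (u t)‖ ^ 2) :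
    ⟪A (u t), u t⟫ ^ (γ - 1) * ‖A (u t)‖ ^ 2 ≤ γ₄ * (1 + t) ^ (-(p + 1)) := by
  have hc₀ : 0 < ‖A u₀‖ ^ 2 := by
    simpa only [hu.1] using
      hct.trans_le (hu.antitoneOn_norm_sq_apply hA (mem_Ici.2 le_rfl) ht ht)
  have ha₀ := hA.inner_apply_self_pos hc₀
  have hm₀ : γ₄⁻¹ ≤ ⟪A u₀, u₀⟫ ^ (1 - γ) / ‖A u₀‖ ^ 2 := by
    rw [← inv_inv (_ / _), ← rpow_sub_one_mul_eq_inv_div ha₀]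
    exact inv_anti₀ (mul_pos (rpow_pos_of_pos ha₀ _) hc₀) hγ₄₀
  have hγ₄pos : 0 < γ₄ := by linarith
  have hm : γ₄⁻¹ * (p + 1) ≤ 2 := by
    rw [inv_mul_le_iff₀ hγ₄pos]
    linarith
  rw [rpow_sub_one_mul_eq_inv_div (hA.inner_apply_self_pos hct), rpow_neg (by linarith),
    ← inv_inv γ₄, ← mul_inv]
  exact inv_anti₀ (mul_pos (inv_pos.2 hγ₄pos) (rpow_pos_of_pos (by linarith) _))
    (hu.mul_rpow_le_rpow_div hA hp hγ ht hct hm₀ hm)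

end IsParSolution

end ParabolicFlow

theorem parabolic_decay_Au_general
    {H : Type*} [NormedAddCommGroup H] [InnerProductSpace ℝ H]
    (A : H →L[ℝ] H)
    (hA_sa : ∀ x y : H, ⟪A x, y⟫ = ⟪x, A y⟫)
    (hA_nn : ∀ x : H, 0 ≤ ⟪A x, x⟫)
    (p γ : ℝ) (hp0 : 0 ≤ p) (hγ : 1 ≤ γ)
    (u₀ : H)
    (u u' : ℝ → H) (hu : IsParSolution A p γ u₀ u u') :
    ∃ γ₄ > 0, ∀ t ∈ Set.Ici (0:ℝ),
      ⟪A (u t), u t⟫ ^ (γ-1) * ‖A (u t)‖ ^ 2 ≤ γ₄ * (1+t) ^ (-(p+1)) := by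
  have hA : A.IsPositive := (A.isPositive_iff).2 ⟨hA_sa, hA_nn⟩
  set γ₄ := max (⟪A u₀, u₀⟫ ^ (γ - 1) * ‖A u₀‖ ^ 2) ((p + 1) / 2)
  have hγ₄ : (p + 1) / 2 ≤ γ₄ := le_max_right _ _
  refine ⟨γ₄, by linarith, fun t ht => ?_⟩
  rcases (sq_nonneg ‖A (u t)‖).eq_or_lt with hct | hct
  · rw [← hct, mul_zero]
    exact mul_nonneg (by linarith) (rpow_nonneg (by linarith [mem_Ici.1 ht]) _)
  · exact hu.decay_of_norm_sq_pos hA hp0 hγ (le_max_left _ _) hγ₄ ht hct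

/-- Decay estimate (3.4): `⟨Au(t),u(t)⟩^{γ-1} |Au(t)|² ≤ γ₄ (1+t)^{-(p+1)}`. -/
theorem parabolic_decay_Au
    {H : Type*} [NormedAddCommGroup H] [InnerProductSpace ℝ H]
    (A : H →L[ℝ] H)
    (hA_sa : ∀ x y : H, ⟪A x, y⟫ = ⟪x, A y⟫)
    (hA_nn : ∀ x : H, 0 ≤ ⟪A x, x⟫)
    (p γ : ℝ) (hp0 : 0 ≤ p) (hp1 : p ≤ 1) (hγ : 1 ≤ γ)
    (u₀ : H) (hmdg : 0 < ⟪A u₀, u₀⟫)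
    (u u' : ℝ → H) (hu : IsParSolution A p γ u₀ u u') :
    ∃ γ₄ > 0, ∀ t ∈ Set.Ici (0:ℝ),
      ⟪A (u t), u t⟫ ^ (γ-1) * ‖A (u t)‖ ^ 2 ≤ γ₄ * (1+t) ^ (-(p+1)) :=
  parabolic_decay_Au_general A hA_sa hA_nn p γ hp0 hγ u₀ u u' hu
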